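/- Two-dimensional torus Weyl law lower bound: for the flat torus (ℝ/2πℤ)², the Laplacian eigenvalue counting function N(λ) = #{(m,n) ∈ ℤ² : m² + n² < λ²} satisfies N(λ)/λ² → π as λ → ∞ (Gauss circle problem leading term). -/

import Mathlib

/-!
Count lattice points instead of eigenvalues: `N(λ)` is the number of points of `ℤ²` in the open
disc of radius `λ`. Since `ℤ²` is a lattice of covolume one in the Euclidean plane and the unit
disc is a bounded convex body (so its boundary is null), the general lattice point counting
theorem for dilates of such a body gives `#(ℤ² ∩ r • D) / r² → vol D = π`. The counting theorem
is for closed dilates; the open disc of radius `r` lies between the closed discs of radii `r - 1`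
and `r`, whose counts have the same asymptotics.
-/

open Real Filter MeasureTheory Metric Set Module Topology

namespace EuclideanSpace

section IntPoint

variable {ι : Type*}

def intPoint (p : ι → ℤ) : EuclideanSpace ℝ ι := WithLp.toLp 2 fun i ↦ (p i : ℝ)

theorem intPoint_injective : Function.Injective (intPoint (ι := ι)) := by
  intro p q h
  funext i
  simpa [intPoint] using congrFun (congrArg WithLp.ofLp h) i

end IntPoint

variable {ι : Type*} [Fintype ι]

abbrev intLattice (ι : Type*) [Fintype ι] : Submodule ℤ (EuclideanSpace ℝ ι) :=
  Submodule.span ℤ (range (EuclideanSpace.basisFun ι ℝ).toBasis)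

theorem covolume_intLattice : ZLattice.covolume (intLattice ι) = 1 := by
  rw [ZLattice.covolume_eq_measure_fundamentalDomain (intLattice ι) volume
    (ZSpan.isAddFundamentalDomain _ volume),
    measureReal_congr (ZSpan.fundamentalDomain_ae_parallelepiped _ volume)]
  simp [measureReal_def, OrthonormalBasis.coe_toBasis, OrthonormalBasis.volume_parallelepiped]

theorem range_intPoint : range (intPoint (ι := ι)) = intLattice ι := by
  ext x
  simp only [mem_range, SetLike.mem_coe, Basis.mem_span_iff_repr_mem]
  constructor
  · rintro ⟨p, rfl⟩ i
    simp [intPoint]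
  · intro hx
    choose p hp using hx
    refine ⟨p, ?_⟩
    ext i
    simpa [intPoint] using hp i

theorem norm_intPoint_sq (p : ι → ℤ) : ‖intPoint p‖ ^ 2 = ∑ i, (p i : ℝ) ^ 2 := by
  simp [EuclideanSpace.real_norm_sq_eq, intPoint]

theorem intPoint_preimage_ball {r : ℝ} (hr : 0 ≤ r) :
    intPoint ⁻¹' ball (0 : EuclideanSpace ℝ ι) r = {p | ∑ i, (p i : ℝ) ^ 2 < r ^ 2} := by
  ext p
  rw [mem_preimage, mem_ball_zero_iff, ← pow_lt_pow_iff_left₀ (norm_nonneg _) hr two_ne_zero,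
    norm_intPoint_sq]
  rfl

theorem card_inter_intLattice (s : Set (EuclideanSpace ℝ ι)) :
    Nat.card (s ∩ intLattice ι : Set (EuclideanSpace ℝ ι)) = Nat.card (intPoint ⁻¹' s) := by
  rw [← range_intPoint, ← Nat.card_preimage_of_injective intPoint_injective inter_subset_right,
    preimage_inter_range]

theorem finite_intPoint_preimage {s : Set (EuclideanSpace ℝ ι)} (hs : Bornology.IsBounded s) :
    (intPoint ⁻¹' s).Finite := by
  have := ZSpan.setFinite_inter (EuclideanSpace.basisFun ι ℝ).toBasis hs
  rw [← range_intPoint] at this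
  simpa [preimage_inter_range] using this.preimage intPoint_injective.injOn

theorem card_intPoint_preimage_mono {s t : Set (EuclideanSpace ℝ ι)} (hst : s ⊆ t)
    (ht : Bornology.IsBounded t) : Nat.card (intPoint ⁻¹' s) ≤ Nat.card (intPoint ⁻¹' t) :=
  Nat.card_mono (finite_intPoint_preimage ht) (preimage_mono hst)

theorem tendsto_card_intPoint_preimage_closedBall_div_pow [Nonempty ι] :
    Tendsto (fun r : ℝ ↦ (Nat.card (intPoint ⁻¹' closedBall (0 : EuclideanSpace ℝ ι) r) : ℝ) /
      r ^ Fintype.card ι) atTop (𝓝 (volume.real (closedBall (0 : EuclideanSpace ℝ ι) 1))) := by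
  set d := finrank ℝ (EuclideanSpace ℝ ι)
  have hd : d = Fintype.card ι := finrank_euclideanSpace
  have hd0 : d ≠ 0 := hd ▸ Fintype.card_ne_zero
  have hball : ∀ c : ℝ, 0 ≤ c →
      {x : EuclideanSpace ℝ ι | x ∈ univ ∧ ‖x‖ ^ d ≤ c ^ d} = closedBall 0 c := by
    intro c hc
    ext x
    simp [pow_le_pow_iff_left₀ (norm_nonneg x) hc hd0]
  have hunit : {x : EuclideanSpace ℝ ι | x ∈ univ ∧ ‖x‖ ^ d ≤ 1} = closedBall 0 1 := by
    simpa using hball 1 zero_le_one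
  -- `‖x‖ ^ d` is homogeneous of degree `d`, so its sublevel sets are the dilates of the unit ball.
  have hcount := ZLattice.covolume.tendsto_card_le_div' (intLattice ι) (X := univ)
    (F := fun x ↦ ‖x‖ ^ d) (fun _ _ _ _ ↦ mem_univ _)
    (fun x r hr ↦ by rw [norm_smul, Real.norm_of_nonneg hr, mul_pow])
    (hunit ▸ isBounded_closedBall) (hunit ▸ measurableSet_closedBall)
    (by rw [hunit, frontier_closedBall _ one_ne_zero]; exact Measure.addHaar_sphere _ _ _)
  rw [hunit, covolume_intLattice, div_one] at hcount
  refine (hcount.comp (tendsto_pow_atTop hd0)).congr' ?_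
  filter_upwards [eventually_ge_atTop 0] with r hr
  simp only [Function.comp_apply]
  rw [← hd, ← hball r hr, card_inter_intLattice]

theorem tendsto_card_intPoint_preimage_ball_div_pow [Nonempty ι] :
    Tendsto (fun r : ℝ ↦ (Nat.card (intPoint ⁻¹' ball (0 : EuclideanSpace ℝ ι) r) : ℝ) /
      r ^ Fintype.card ι) atTop (𝓝 (volume.real (closedBall (0 : EuclideanSpace ℝ ι) 1))) := by
  have hclosed := tendsto_card_intPoint_preimage_closedBall_div_pow (ι := ι)
  have hshift : Tendsto (fun r : ℝ ↦
      (Nat.card (intPoint ⁻¹' closedBall (0 : EuclideanSpace ℝ ι) (r - 1)) : ℝ) /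
        r ^ Fintype.card ι) atTop (𝓝 (volume.real (closedBall (0 : EuclideanSpace ℝ ι) 1))) := by
    have hratio : Tendsto (fun r : ℝ ↦ (1 - r⁻¹) ^ Fintype.card ι) atTop (𝓝 1) := by
      simpa using ((tendsto_inv_atTop_zero (𝕜 := ℝ)).const_sub 1).pow (Fintype.card ι)
    have := (hclosed.comp (tendsto_atTop_add_const_right _ (-1) tendsto_id)).mul hratio
    rw [mul_one] at this
    refine this.congr' ?_
    filter_upwards [eventually_gt_atTop 1] with r hr
    have : r - 1 ≠ 0 := by linarith
    simp only [Function.comp_apply, id, ← sub_eq_add_neg]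
    rw [show 1 - r⁻¹ = (r - 1) / r by field_simp, div_pow]
    field_simp
  refine tendsto_of_tendsto_of_tendsto_of_le_of_le' hshift hclosed ?_ ?_
  all_goals
    filter_upwards [eventually_gt_atTop 0] with r hr
    gcongr
  · exact card_intPoint_preimage_mono (closedBall_subset_ball (by linarith)) isBounded_ball
  · exact card_intPoint_preimage_mono ball_subset_closedBall isBounded_closedBall

end EuclideanSpace

/-- Gauss circle / 2D torus Weyl law leading term:
`N(lam) = #{(m,n) ∈ ℤ² : m² + n² < lam²}` satisfies `N(lam)/lam² → π` as `lam → ∞`. -/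
theorem torus_weyl_law_leading_term :
    Tendsto
      (fun lam : ℝ =>
        (Nat.card {p : ℤ × ℤ | (p.1 : ℝ) ^ 2 + (p.2 : ℝ) ^ 2 < lam ^ 2} : ℝ) / lam ^ 2)
      atTop (nhds π) := by
  have hvol : volume.real (closedBall (0 : EuclideanSpace ℝ (Fin 2)) 1) = π := by
    simp [measureReal_def, Real.pi_nonneg]
  have hcount := EuclideanSpace.tendsto_card_intPoint_preimage_ball_div_pow (ι := Fin 2)
  rw [hvol, Fintype.card_fin] at hcount
  refine hcount.congr' ?_
  filter_upwards [eventually_ge_atTop 0] with lam hlam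
  rw [EuclideanSpace.intPoint_preimage_ball hlam]
  congr 2
  exact Nat.card_congr ((finTwoArrowEquiv ℤ).subtypeEquiv fun p ↦ by simp [Fin.sum_univ_two])
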